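/- Let G be a primitive graph of order n with odd girth p ≥ 3 (the shortest odd cycle has length p). Then γ(G) ≤ 2n − p − 1, with equality if and only if G is isomorphic to F_{n,p}, the graph obtained by joining one end of a path on n − p vertices to a vertex of the cycle C_p by an edge. -/
import Mathlib


/-- Existence of a walk of length `k` from `x` to `y` in the graph with adjacency
relation `adj` (loops allowed, no parallel edges). -/
def GWalk {V : Type*} (adj : V → V → Prop) : ℕ → V → V → Prop
  | 0, x, y => x = y
  | k + 1, x, y => ∃ z, adj x z ∧ GWalk adj k z y

/-- Distance: the length of a shortest walk (= shortest path) from `x` to `y`. -/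
noncomputable def GDist {V : Type*} (adj : V → V → Prop) (x y : V) : ℕ :=
  sInf {k | GWalk adj k x y}

/-- The graph is connected: any two vertices are joined by some walk. -/
def GConnected {V : Type*} (adj : V → V → Prop) : Prop :=
  ∀ x y, ∃ k, GWalk adj k x y

/-- The graph contains a closed walk of odd length (an "odd cycle"). -/
def HasOddClosedWalk {V : Type*} (adj : V → V → Prop) : Prop :=
  ∃ (x : V) (k : ℕ), Odd k ∧ GWalk adj k x x

/-- The graph is primitive: some `γ` works as an exponent. -/
def GPrimitive {V : Type*} (adj : V → V → Prop) : Prop :=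
  ∃ γ : ℕ, ∀ x y : V, ∀ k ≥ γ, GWalk adj k x y

/-- Adjacency of the Kronecker (tensor) product. -/
def KronAdj {V₁ V₂ : Type*} (adj₁ : V₁ → V₁ → Prop) (adj₂ : V₂ → V₂ → Prop) :
    V₁ × V₂ → V₁ × V₂ → Prop :=
  fun a b => adj₁ a.1 b.1 ∧ adj₂ a.2 b.2

/-- Adjacency of the graph `F_{n,p}`: the cycle `C_p` on vertices `n-p, …, n-1`
joined by an edge to the end of the path on vertices `0, …, n-p-1`. -/
def FAdj (n p : ℕ) (a b : Fin n) : Prop :=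
  (a.val + 1 = b.val ∨ b.val + 1 = a.val) ∨
    ((a.val = n - p ∧ b.val = n - 1) ∨ (b.val = n - p ∧ a.val = n - 1))

namespace S11
variable {V : Type*} {adj : V → V → Prop}

theorem gwalk_append : ∀ {a : ℕ} {x y : V} {b : ℕ} {z : V},
    GWalk adj a x y → GWalk adj b y z → GWalk adj (a + b) x z := by
  intro a
  induction a with
  | zero => intro x y b z h1 h2; cases h1; simpa using h2
  | succ a ih =>
    intro x y b z h1 h2
    obtain ⟨w, hw, h1'⟩ := h1
    rw [show a + 1 + b = (a + b) + 1 by omega]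
    exact ⟨w, hw, ih h1' h2⟩

theorem gwalk_one {x z : V} (h : adj x z) : GWalk adj 1 x z := ⟨z, h, rfl⟩

theorem gwalk_symm (hs : Symmetric adj) : ∀ {a : ℕ} {x y : V},
    GWalk adj a x y → GWalk adj a y x := by
  intro a
  induction a with
  | zero => intro x y h; cases h; rfl
  | succ a ih =>
    intro x y h
    obtain ⟨w, hw, h'⟩ := h
    exact gwalk_append (ih h') (gwalk_one (hs hw))

theorem gwalk_pad (hs : Symmetric adj) {x y : V} {k : ℕ} (hz : ∃ z, adj x z)
    (h : GWalk adj k x y) : GWalk adj (k + 2) x y := by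
  obtain ⟨z, hxz⟩ := hz
  rw [show k + 2 = 2 + k by omega]
  exact gwalk_append (⟨z, hxz, x, hs hxz, rfl⟩ : GWalk adj 2 x x) h

theorem gwalk_pad_many (hs : Symmetric adj) {x y : V} {k : ℕ} (hz : ∃ z, adj x z)
    (h : GWalk adj k x y) : ∀ m, GWalk adj (k + 2 * m) x y := by
  intro m
  induction m with
  | zero => simpa using h
  | succ m ih =>
    rw [show k + 2 * (m + 1) = (k + 2 * m) + 2 by omega]
    exact gwalk_pad hs hz ih

theorem gwalk_fun (f : ℕ → V) (i : ℕ) : ∀ d : ℕ,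
    (∀ t, i ≤ t → t < i + d → adj (f t) (f (t + 1))) →
    GWalk adj d (f i) (f (i + d)) := by
  intro d
  induction d with
  | zero => intro _; rfl
  | succ d ih =>
    intro h
    rw [show i + (d + 1) = (i + d) + 1 by omega]
    exact gwalk_append (ih (fun t ht ht' => h t ht (by omega)))
      (gwalk_one (h (i + d) (by omega) (by omega)))

theorem fun_of_gwalk : ∀ {k : ℕ} {x y : V}, GWalk adj k x y →
    ∃ f : ℕ → V, f 0 = x ∧ f k = y ∧ ∀ t < k, adj (f t) (f (t + 1)) := by
  intro k
  induction k with
  | zero => intro x y h; cases h; exact ⟨fun _ => x, rfl, rfl, by omega⟩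
  | succ k ih =>
    intro x y h
    obtain ⟨z, hxz, h'⟩ := h
    obtain ⟨f, hf0, hfk, hf⟩ := ih h'
    refine ⟨fun t => if t = 0 then x else f (t - 1), rfl, by simp [hfk], ?_⟩
    intro t ht
    rcases Nat.eq_zero_or_pos t with rfl | htpos
    · simpa [hf0] using hxz
    · have h1 : ¬ (t = 0) := by omega
      have h2 : ¬ (t + 1 = 0) := by omega
      simp only [h1, h2, if_false]
      have := hf (t - 1) (by omega)
      rwa [show t - 1 + 1 = t by omega] at this

end S11

namespace S11
section cyc
variable {V : Type*} {adj : V → V → Prop} {p : ℕ} {c : ℕ → V}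

theorem c_mod (hp : 0 < p) (hper : ∀ i, c (i + p) = c i) (i : ℕ) : c i = c (i % p) := by
  have key : ∀ m r, c (r + p * m) = c r := by
    intro m
    induction m with
    | zero => simp
    | succ m ih =>
      intro r
      rw [show r + p * (m + 1) = (r + p * m) + p by ring, hper, ih]
  conv_lhs => rw [← Nat.mod_add_div i p]
  exact key _ _

theorem cyc_walk (hc : ∀ i, adj (c i) (c (i + 1))) {i j : ℕ} (hij : i ≤ j) :
    GWalk adj (j - i) (c i) (c j) := by
  have := gwalk_fun (adj := adj) c i (j - i) (fun t _ _ => hc t)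
  rwa [show i + (j - i) = j by omega] at this

theorem cyc_inj (hp : 3 ≤ p) (hodd : Odd p)
    (hc : ∀ i, adj (c i) (c (i + 1))) (hper : ∀ i, c (i + p) = c i)
    (hlow : ∀ (k : ℕ) (x : V), Odd k → GWalk adj k x x → p ≤ k) :
    ∀ i < p, ∀ j < p, c i = c j → i = j := by
  have key : ∀ i j, i < j → j < p → c i = c j → False := by
    intro i j hij hjp heq
    have ha : 1 ≤ j - i ∧ j - i ≤ p - 1 := by omega
    have w1 : GWalk adj (j - i) (c i) (c i) := by
      have := cyc_walk (adj := adj) hc (le_of_lt hij)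
      rwa [← heq] at this
    have w2 : GWalk adj (p - (j - i)) (c j) (c j) := by
      have := cyc_walk (adj := adj) hc (show j ≤ i + p by omega)
      rw [show i + p - j = p - (j - i) by omega, hper, heq] at this
      exact this
    have hodd' : (j - i) % 2 = 1 ∨ (p - (j - i)) % 2 = 1 := by
      rcases hodd with ⟨t, ht⟩; omega
    rcases hodd' with h | h
    · have := hlow _ _ (Nat.odd_iff.mpr h) w1; omega
    · have := hlow _ _ (Nat.odd_iff.mpr h) w2; omega
  intro i hi j hj heq
  rcases lt_trichotomy i j with h | h | h
  · exact absurd (key i j h hj heq) (by simp)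
  · exact h
  · exact absurd (key j i h hi heq.symm) (by simp)

theorem cyc_chord (hp : 3 ≤ p) (hodd : Odd p) (hs : Symmetric adj)
    (hc : ∀ i, adj (c i) (c (i + 1))) (hper : ∀ i, c (i + p) = c i)
    (hlow : ∀ (k : ℕ) (x : V), Odd k → GWalk adj k x x → p ≤ k)
    {i j : ℕ} (hi : i < p) (hj : j < p) (hij : i < j) (hadj : adj (c i) (c j)) :
    j = i + 1 ∨ (i = 0 ∧ j = p - 1) := by
  set a := j - i with ha
  have ha1 : 1 ≤ a ∧ a ≤ p - 1 := by omega
  have w1 : GWalk adj (a + 1) (c i) (c i) :=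
    gwalk_append (cyc_walk (adj := adj) hc (le_of_lt hij)) (gwalk_one (hs hadj))
  have w2 : GWalk adj ((p - a) + 1) (c j) (c j) := by
    have hw : GWalk adj (p - a) (c j) (c i) := by
      have := cyc_walk (adj := adj) hc (show j ≤ i + p by omega)
      rwa [show i + p - j = p - a by omega, hper] at this
    exact gwalk_append hw (gwalk_one hadj)
  have hodd' : (a + 1) % 2 = 1 ∨ ((p - a) + 1) % 2 = 1 := by
    rcases hodd with ⟨t, ht⟩; omega
  rcases hodd' with h | h
  · have := hlow _ _ (Nat.odd_iff.mpr h) w1; right; omega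
  · have := hlow _ _ (Nat.odd_iff.mpr h) w2; left; omega

end cyc
end S11

namespace S11
section main
variable {V : Type*} {adj : V → V → Prop} {p : ℕ} {c : ℕ → V}

theorem main_walk (hp : 3 ≤ p) (hodd : Odd p) (hs : Symmetric adj)
    (hc : ∀ i, adj (c i) (c (i + 1))) (hper : ∀ i, c (i + p) = c i)
    {x y : V} {k d1 d2 i j : ℕ} (hi : i < p) (hj : j < p)
    (w1 : GWalk adj d1 x (c i)) (w2 : GWalk adj d2 y (c j))
    (hnbr : ∃ z, adj x z) (hk : d1 + d2 + (p - 1) ≤ k) :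
    GWalk adj k x y := by
  set a := if i ≤ j then j - i else j + p - i with ha
  have hap : a ≤ p - 1 := by dsimp [a]; split <;> omega
  have walkA : GWalk adj a (c i) (c j) := by
    by_cases hij : i ≤ j
    · have haa : a = j - i := by rw [ha, if_pos hij]
      rw [haa]
      exact cyc_walk (adj := adj) hc hij
    · have haa : a = j + p - i := by rw [ha, if_neg hij]
      have := cyc_walk (adj := adj) hc (show i ≤ j + p by omega)
      rw [hper j] at this
      rwa [← haa] at this
  have walkB : GWalk adj (p - a) (c j) (c i) := by
    by_cases hij : i ≤ j
    · have haa : a = j - i := by rw [ha, if_pos hij]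
      have := cyc_walk (adj := adj) hc (show j ≤ i + p by omega)
      rw [hper i] at this
      have heq : i + p - j = p - a := by omega
      rwa [heq] at this
    · have haa : a = j + p - i := by rw [ha, if_neg hij]
      have := cyc_walk (adj := adj) hc (show j ≤ i by omega)
      have heq : i - j = p - a := by omega
      rwa [heq] at this
  set s := k - d1 - d2 with hsdef
  have hs1 : p - 1 ≤ s := by omega
  have hparity : ∃ e m, (e = a ∨ e = p - a) ∧ e + 2 * m = s := by
    by_cases hpar : (s - a) % 2 = 0
    · exact ⟨a, (s - a) / 2, Or.inl rfl, by omega⟩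
    · refine ⟨p - a, (s - (p - a)) / 2, Or.inr rfl, ?_⟩
      have hodd2 : p % 2 = 1 := Nat.odd_iff.mp hodd
      omega
  obtain ⟨e, m, he, hem⟩ := hparity
  have walkE : GWalk adj e (c i) (c j) := by
    rcases he with rfl | rfl
    · exact walkA
    · exact gwalk_symm hs walkB
  have wtot : GWalk adj (d1 + (e + d2)) x y :=
    gwalk_append w1 (gwalk_append walkE (gwalk_symm hs w2))
  have := gwalk_pad_many hs hnbr wtot m
  rwa [show d1 + (e + d2) + 2 * m = k by omega] at this

end main

section dist
variable {V : Type*}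

noncomputable def cycDist (adj : V → V → Prop) (c : ℕ → V) (p : ℕ) (x : V) : ℕ :=
  sInf {k | ∃ i < p, GWalk adj k x (c i)}

variable {adj : V → V → Prop} {p : ℕ} {c : ℕ → V}

theorem cycDist_spec {x : V} (hne : {k | ∃ i < p, GWalk adj k x (c i)}.Nonempty) :
    ∃ i < p, GWalk adj (cycDist adj c p x) x (c i) := Nat.sInf_mem hne

theorem cycDist_le {x : V} {k i : ℕ} (hi : i < p) (w : GWalk adj k x (c i)) :
    cycDist adj c p x ≤ k := Nat.sInf_le ⟨i, hi, w⟩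

theorem cycDist_le_card [Fintype V] {x : V}
    (hne : {k | ∃ i < p, GWalk adj k x (c i)}.Nonempty)
    (hinj : ∀ i < p, ∀ j < p, c i = c j → i = j) :
    cycDist adj c p x + p ≤ Fintype.card V := by
  classical
  set m := cycDist adj c p x with hm
  obtain ⟨i₀, hi₀, w⟩ := cycDist_spec hne
  obtain ⟨f, hf0, hfm, hf⟩ := fun_of_gwalk w
  have walk_to : ∀ t ≤ m, GWalk adj t x (f t) := by
    intro t ht
    have := gwalk_fun (adj := adj) f 0 t (fun u hu hu' => hf u (by omega))
    simpa [hf0] using this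
  have walk_from : ∀ t ≤ m, GWalk adj (m - t) (f t) (c i₀) := by
    intro t ht
    have := gwalk_fun (adj := adj) f t (m - t) (fun u hu hu' => hf u (by omega))
    rwa [show t + (m - t) = m by omega, hfm] at this
  have havoid : ∀ t < m, ∀ i < p, f t ≠ c i := by
    intro t ht i hi heq
    have : m ≤ t := cycDist_le hi (heq ▸ walk_to t (by omega))
    omega
  have hfinj : ∀ a < m, ∀ b < m, f a = f b → a = b := by
    have key : ∀ a b, a < b → b < m → f a = f b → False := by
      intro a b hab hbm heq
      have wcomb : GWalk adj (a + (m - b)) x (c i₀) :=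
        gwalk_append (walk_to a (by omega)) (heq ▸ walk_from b (by omega))
      have := cycDist_le hi₀ wcomb
      omega
    intro a ha b hb heq
    rcases lt_trichotomy a b with h | h | h
    · exact absurd (key a b h hb heq) (by simp)
    · exact h
    · exact absurd (key b a h ha heq.symm) (by simp)
  set A := (Finset.range m).image f with hA
  set B := (Finset.range p).image (fun i => c i) with hB
  have hcardA : A.card = m := by
    rw [hA, Finset.card_image_of_injOn, Finset.card_range]
    intro a ha b hb heq
    exact hfinj a (Finset.mem_range.mp ha) b (Finset.mem_range.mp hb) heq
  have hcardB : B.card = p := by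
    rw [hB, Finset.card_image_of_injOn, Finset.card_range]
    intro a ha b hb heq
    exact hinj a (Finset.mem_range.mp ha) b (Finset.mem_range.mp hb) heq
  have hdisj : Disjoint A B := by
    rw [Finset.disjoint_left]
    intro v hv hv'
    rw [hA, Finset.mem_image] at hv
    rw [hB, Finset.mem_image] at hv'
    obtain ⟨t, ht, rfl⟩ := hv
    obtain ⟨i, hi, heq⟩ := hv'
    exact havoid t (Finset.mem_range.mp ht) i (Finset.mem_range.mp hi) heq.symm
  calc m + p = (A ∪ B).card := by rw [Finset.card_union_of_disjoint hdisj, hcardA, hcardB]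
  _ ≤ Fintype.card V := Finset.card_le_univ _

end dist
end S11

namespace S11
section fpart
variable {V : Type*} {W : Type*}

theorem gwalk_map {adj : V → V → Prop} {adjW : W → W → Prop} (e : V → W)
    (h : ∀ x y, adj x y → adjW (e x) (e y)) :
    ∀ {k : ℕ} {x y : V}, GWalk adj k x y → GWalk adjW k (e x) (e y) := by
  intro k
  induction k with
  | zero => intro x y hw; cases hw; rfl
  | succ k ih =>
    intro x y hw
    obtain ⟨z, hz, hw'⟩ := hw
    exact ⟨e z, h _ _ hz, ih hw'⟩

def fpot (n p v ε : ℕ) : ℕ := if v % 2 = ε % 2 then v else 2 * n - p - v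

theorem fpot_lip {n p : ℕ} (hp : 3 ≤ p) (hpn : p ≤ n) (hodd : p % 2 = 1)
    {u z : Fin n} (hadj : FAdj n p u z) (ε : ℕ) :
    fpot n p u.val (ε + 1) ≤ fpot n p z.val ε + 1 := by
  have hu := u.isLt
  have hz := z.isLt
  rcases hadj with (h | h) | (h | h) <;>
  · simp only [fpot]
    split_ifs <;> omega

theorem fstep {n p : ℕ} (hp : 3 ≤ p) (hpn : p ≤ n) (hodd : p % 2 = 1) :
    ∀ (k : ℕ) (u v : Fin n), GWalk (FAdj n p) k u v → v.val = 0 →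
      fpot n p u.val k ≤ k := by
  intro k
  induction k with
  | zero =>
    intro u v hw hv
    cases hw
    simp only [fpot, hv]
    split_ifs <;> omega
  | succ k ih =>
    intro u v hw hv
    obtain ⟨z, hz, hw'⟩ := hw
    have h1 := ih z v hw' hv
    have h2 := fpot_lip hp hpn hodd hz k
    have hmod : fpot n p u.val (k + 1) = fpot n p u.val (k + 1 + 2 * 0) := by norm_num
    omega

theorem fpot_mod (n p v ε ε' : ℕ) (h : ε % 2 = ε' % 2) : fpot n p v ε = fpot n p v ε' := by
  simp only [fpot, h]

theorem fmain {n p k : ℕ} (hp : 3 ≤ p) (hpn : p ≤ n) (hodd : p % 2 = 1)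
    (hk : k % 2 = 1) {x y : Fin n} (hx : x.val = 0) (hy : y.val = 0)
    (w : GWalk (FAdj n p) k x y) : 2 * n - p ≤ k := by
  have := fstep hp hpn hodd k x y w hy
  rw [fpot_mod n p x.val k 1 (by omega), hx] at this
  norm_num [fpot] at this
  omega

end fpart
end S11


namespace S11
section helpers
variable {V : Type*} {adj : V → V → Prop} {p : ℕ} {c : ℕ → V}

theorem cyc_classify (hp : 3 ≤ p) (hodd : Odd p) (hs : Symmetric adj) (hirr : Irreflexive adj)
    (hc : ∀ i, adj (c i) (c (i + 1))) (hper : ∀ i, c (i + p) = c i)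
    (hlow : ∀ (k : ℕ) (x : V), Odd k → GWalk adj k x x → p ≤ k)
    {i j : ℕ} (hi : i < p) (hj : j < p) (hadj : adj (c i) (c j)) :
    j = (i + 1) % p ∨ i = (j + 1) % p := by
  have hij : i ≠ j := by
    intro h
    exact hirr (c j) (h ▸ hadj)
  rcases lt_trichotomy i j with h | h | h
  · rcases cyc_chord hp hodd hs hc hper hlow hi hj h hadj with h2 | ⟨h2, h3⟩
    · left; rw [Nat.mod_eq_of_lt (by omega)]; omega
    · right; rw [show j + 1 = p by omega, Nat.mod_self]; omega
  · exact absurd h hij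
  · rcases cyc_chord hp hodd hs hc hper hlow hj hi h (hs hadj) with h2 | ⟨h2, h3⟩
    · right; rw [Nat.mod_eq_of_lt (by omega)]; omega
    · left; rw [show i + 1 = p by omega, Nat.mod_self]; omega

theorem fadj_symm {n p : ℕ} {a b : Fin n} (h : FAdj n p a b) : FAdj n p b a := by
  unfold FAdj at *; tauto

end helpers
end S11


open S11 in
theorem stmt11 {V : Type*} [Fintype V] (adj : V → V → Prop)
    (hsymm : Symmetric adj) (hirr : Irreflexive adj)
    (n p γ : ℕ) (hn : n = Fintype.card V) (hp : 3 ≤ p)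
    (hgirth : IsLeast {k : ℕ | Odd k ∧ ∃ x : V, GWalk adj k x x} p)
    (hγ : IsLeast {m : ℕ | ∀ x y : V, ∀ k ≥ m, GWalk adj k x y} γ) :
    γ ≤ 2 * n - p - 1 ∧
      (γ = 2 * n - p - 1 ↔ ∃ e : V ≃ Fin n, ∀ x y : V, adj x y ↔ FAdj n p (e x) (e y)) := by
  classical
  obtain ⟨⟨hoddp, x₀, w₀⟩, hgl⟩ := hgirth
  obtain ⟨hγ1, hγ2⟩ := hγ
  have hlow : ∀ (k : ℕ) (x : V), Odd k → GWalk adj k x x → p ≤ k :=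
    fun k x h1 h2 => hgl ⟨h1, x, h2⟩
  have hpm2 : p % 2 = 1 := Nat.odd_iff.mp hoddp
  have hpos : 0 < p := by omega
  obtain ⟨f₀, hf₀0, hf₀p, hf₀⟩ := fun_of_gwalk w₀
  set c : ℕ → V := fun i => f₀ (i % p) with hcdef
  have hcper : ∀ i, c (i + p) = c i := fun i => by simp [hcdef, Nat.add_mod_right]
  have hone : (1 : ℕ) % p = 1 := Nat.mod_eq_of_lt (by omega)
  have hcadj : ∀ i, adj (c i) (c (i + 1)) := by
    intro i
    have hr : i % p < p := Nat.mod_lt i hpos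
    have hs1 : (i + 1) % p = (i % p + 1) % p := by rw [Nat.add_mod, hone]
    rcases Nat.lt_or_ge (i % p) (p - 1) with h | h
    · have h2 : (i + 1) % p = i % p + 1 := by
        rw [hs1, Nat.mod_eq_of_lt (by omega)]
      show adj (f₀ (i % p)) (f₀ ((i + 1) % p))
      rw [h2]
      exact hf₀ (i % p) hr
    · have hrp : i % p = p - 1 := by omega
      have h2 : (i + 1) % p = 0 := by
        rw [hs1, hrp, show p - 1 + 1 = p by omega, Nat.mod_self]
      show adj (f₀ (i % p)) (f₀ ((i + 1) % p))
      rw [h2, hrp, hf₀0, ← hf₀p, ← show p - 1 + 1 = p by omega]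
      exact hf₀ (p - 1) (by omega)
  have hinj : ∀ i < p, ∀ j < p, c i = c j → i = j :=
    cyc_inj hp hoddp hcadj hcper hlow
  have hnbr : ∀ x : V, ∃ z, adj x z := by
    intro x
    obtain ⟨z, hz, -⟩ := hγ1 x x (γ + 1) (by omega)
    exact ⟨z, hz⟩
  have hne : ∀ x : V, {k | ∃ i < p, GWalk adj k x (c i)}.Nonempty :=
    fun x => ⟨γ, 0, hpos, hγ1 x (c 0) γ le_rfl⟩
  have hcd : ∀ x : V, cycDist adj c p x + p ≤ n := by
    intro x
    have := cycDist_le_card (hne x) hinj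
    omega
  have hpn : p ≤ n := by have := hcd x₀; omega
  have bound : ∀ (x y : V) (k : ℕ),
      cycDist adj c p x + cycDist adj c p y + (p - 1) ≤ k → GWalk adj k x y := by
    intro x y k hk
    obtain ⟨i, hi, wi⟩ := cycDist_spec (hne x)
    obtain ⟨j, hj, wj⟩ := cycDist_spec (hne y)
    exact main_walk hp hoddp hsymm hcadj hcper hi hj wi wj (hnbr x) hk
  have hub : γ ≤ 2 * n - p - 1 := by
    apply hγ2
    intro x y k hk
    have h1 := hcd x
    have h2 := hcd y
    exact bound x y k (by omega)
  refine ⟨hub, ?_, ?_⟩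
  · -- γ = 2n-p-1 → iso
    intro hEq
    by_cases hnp : n = p
    · -- Case A : the graph is exactly the cycle
      have hbijA : Function.Bijective (fun t : Fin n => c t.val) := by
        rw [Fintype.bijective_iff_injective_and_card]
        refine ⟨?_, by rw [Fintype.card_fin]; exact hn⟩
        intro a b hab
        exact Fin.ext (hinj a.val (by have := a.isLt; omega) b.val (by have := b.isLt; omega) hab)
      have hcp0 : c p = c 0 := by have := hcper 0; rwa [zero_add] at this
      have hkey : ∀ a b : Fin n, adj (c a.val) (c b.val) ↔ FAdj n p a b := by
        intro a b
        have ha := a.isLt; have hb := b.isLt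
        constructor
        · intro hab
          unfold FAdj
          have hcl := cyc_classify hp hoddp hsymm hirr hcadj hcper hlow
            (i := a.val) (j := b.val) (by omega) (by omega) hab
          rcases hcl with h | h
          · rcases Nat.lt_or_ge (a.val + 1) p with h2 | h2
            · rw [Nat.mod_eq_of_lt h2] at h
              exact Or.inl (Or.inl h.symm)
            · have h3 : a.val + 1 = p := by omega
              rw [h3, Nat.mod_self] at h
              exact Or.inr (Or.inr ⟨by omega, by omega⟩)
          · rcases Nat.lt_or_ge (b.val + 1) p with h2 | h2
            · rw [Nat.mod_eq_of_lt h2] at h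
              exact Or.inl (Or.inr h.symm)
            · have h3 : b.val + 1 = p := by omega
              rw [h3, Nat.mod_self] at h
              exact Or.inr (Or.inl ⟨by omega, by omega⟩)
        · intro hF
          unfold FAdj at hF
          rcases hF with (h | h) | (⟨h1, h2⟩ | ⟨h1, h2⟩)
          · rw [← h]; exact hcadj a.val
          · exact hsymm (by rw [← h]; exact hcadj b.val)
          · have := hcadj (p - 1)
            rw [show p - 1 + 1 = p by omega, hcp0] at this
            rw [show a.val = 0 by omega, show b.val = p - 1 by omega]
            exact hsymm this
          · have := hcadj (p - 1)
            rw [show p - 1 + 1 = p by omega, hcp0] at this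
            rw [show b.val = 0 by omega, show a.val = p - 1 by omega]
            exact this
      refine ⟨(Equiv.ofBijective _ hbijA).symm, ?_⟩
      intro x y
      have hx : c (((Equiv.ofBijective _ hbijA).symm x) : Fin n).val = x :=
        (Equiv.ofBijective _ hbijA).apply_symm_apply x
      have hy : c (((Equiv.ofBijective _ hbijA).symm y) : Fin n).val = y :=
        (Equiv.ofBijective _ hbijA).apply_symm_apply y
      constructor
      · intro hadj
        exact (hkey _ _).mp (by rwa [hx, hy])
      · intro hF
        have := (hkey _ _).mpr hF
        rwa [hx, hy] at this
    · -- Case B : there is a path hanging off the cycle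
      have hplt : p < n := by omega
      set m := n - p with hm
      have hm1 : 1 ≤ m := by omega
      have hnotall : ∃ x y : V, ∃ k, 2 * n - p - 2 ≤ k ∧ ¬ GWalk adj k x y := by
        by_contra hall
        push_neg at hall
        have hmem : (2 * n - p - 2) ∈ {m | ∀ x y : V, ∀ k ≥ m, GWalk adj k x y} :=
          fun x y k hk => hall x y k hk
        have := hγ2 hmem
        omega
      obtain ⟨xb, yb, kb, hkb, hnw⟩ := hnotall
      have hdx : cycDist adj c p xb = m := by
        by_contra hdd
        have h1 := hcd xb; have h2 := hcd yb
        exact hnw (bound xb yb kb (by omega))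
      obtain ⟨i₀, hi₀, wstar0⟩ := cycDist_spec (hne xb)
      rw [hdx] at wstar0
      obtain ⟨f, hff0, hffm, hff⟩ := fun_of_gwalk wstar0
      have walk_to : ∀ t ≤ m, GWalk adj t xb (f t) := by
        intro t ht
        have := gwalk_fun (adj := adj) f 0 t (fun u hu hu' => hff u (by omega))
        simpa [hff0] using this
      have walk_from : ∀ t ≤ m, GWalk adj (m - t) (f t) (c i₀) := by
        intro t ht
        have := gwalk_fun (adj := adj) f t (m - t) (fun u hu hu' => hff u (by omega))
        rwa [show t + (m - t) = m by omega, hffm] at this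
      have havoid : ∀ t < m, ∀ i < p, f t ≠ c i := by
        intro t ht i hi heq
        have := cycDist_le (adj := adj) hi (heq ▸ walk_to t (by omega))
        omega
      have hfinj : ∀ a ≤ m, ∀ b ≤ m, f a = f b → a = b := by
        have key : ∀ a b, a < b → b ≤ m → f a = f b → False := by
          intro a b hab hbm heq
          rcases Nat.eq_or_lt_of_le hbm with rfl | hbm'
          · exact havoid a (by omega) i₀ hi₀ (by rw [heq, hffm])
          · have wcomb : GWalk adj (a + (m - b)) xb (c i₀) :=
              gwalk_append (walk_to a (by omega)) (heq ▸ walk_from b (by omega))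
            have := cycDist_le hi₀ wcomb
            omega
        intro a ha b hb heq
        rcases lt_trichotomy a b with h | h | h
        · exact absurd (key a b h hb heq) (by simp)
        · exact h
        · exact absurd (key b a h ha heq.symm) (by simp)
      set cc : ℕ → V := fun t => c (t + i₀) with hccdef
      have hccadj : ∀ t, adj (cc t) (cc (t + 1)) := by
        intro t
        show adj (c (t + i₀)) (c (t + 1 + i₀))
        rw [show t + 1 + i₀ = (t + i₀) + 1 by omega]
        exact hcadj _
      have hccper : ∀ t, cc (t + p) = cc t := by
        intro t
        show c (t + p + i₀) = c (t + i₀)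
        rw [show t + p + i₀ = (t + i₀) + p by omega]
        exact hcper _
      have hccinj : ∀ i < p, ∀ j < p, cc i = cc j → i = j :=
        cyc_inj hp hoddp hccadj hccper hlow
      have hcc0 : cc 0 = c i₀ := by show c (0 + i₀) = c i₀; rw [zero_add]
      have hccp0 : cc p = cc 0 := by have := hccper 0; rwa [zero_add] at this
      have havoid' : ∀ t < m, ∀ i, f t ≠ cc i := by
        intro t ht i heq
        have h2 : f t = c ((i + i₀) % p) := by
          rw [heq]
          exact c_mod hpos hcper (i + i₀)
        exact havoid t ht _ (Nat.mod_lt _ hpos) h2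
      set g : Fin n → V := fun t => if t.val < m then f t.val else cc (t.val - m) with hgdef
      have gval_lt : ∀ (a : Fin n), a.val < m → g a = f a.val := by
        intro a h; simp only [hgdef]; rw [if_pos h]
      have gval_ge : ∀ (a : Fin n), ¬ a.val < m → g a = cc (a.val - m) := by
        intro a h; simp only [hgdef]; rw [if_neg h]
      have hginj : Function.Injective g := by
        intro a b heq
        have ha := a.isLt; have hb := b.isLt
        by_cases h1 : a.val < m <;> by_cases h2 : b.val < m
        · rw [gval_lt a h1, gval_lt b h2] at heq
          exact Fin.ext (hfinj a.val (by omega) b.val (by omega) heq)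
        · rw [gval_lt a h1, gval_ge b h2] at heq
          exact absurd heq (havoid' a.val h1 _)
        · rw [gval_ge a h1, gval_lt b h2] at heq
          exact absurd heq.symm (havoid' b.val h2 _)
        · rw [gval_ge a h1, gval_ge b h2] at heq
          have := hccinj (a.val - m) (by omega) (b.val - m) (by omega) heq
          exact Fin.ext (by omega)
      have hbijg : Function.Bijective g :=
        (Fintype.bijective_iff_injective_and_card g).mpr
          ⟨hginj, by rw [Fintype.card_fin]; exact hn⟩
      have hvadj0 : adj (f (m - 1)) (cc 0) := by
        have := hff (m - 1) (by omega)
        rwa [show m - 1 + 1 = m by omega, hffm, ← hcc0] at this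
      have hard : ∀ jj, 1 ≤ jj → jj < p → adj (f (m - 1)) (cc jj) → False := by
        intro jj hj1 hj2 hvj
        have w0j : GWalk adj jj (cc 0) (cc jj) := by
          have := cyc_walk (adj := adj) hccadj (show 0 ≤ jj by omega)
          simpa using this
        have wj0 : GWalk adj (p - jj) (cc jj) (cc 0) := by
          have := cyc_walk (adj := adj) hccadj (show jj ≤ p by omega)
          rwa [hccp0] at this
        have closed1 : GWalk adj (jj + 2) (f (m - 1)) (f (m - 1)) := by
          have := gwalk_append (gwalk_one hvadj0)
            (gwalk_append w0j (gwalk_one (hsymm hvj)))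
          rwa [show 1 + (jj + 1) = jj + 2 by omega] at this
        have closed2 : GWalk adj ((p - jj) + 2) (f (m - 1)) (f (m - 1)) := by
          have := gwalk_append (gwalk_one hvj)
            (gwalk_append wj0 (gwalk_one (hsymm hvadj0)))
          rwa [show 1 + ((p - jj) + 1) = (p - jj) + 2 by omega] at this
        have hjcase : jj = 2 ∨ jj = p - 2 := by
          rcases Nat.even_or_odd jj with hev | hodd2
          · have hev2 := Nat.even_iff.mp hev
            have hodd3 : ((p - jj) + 2) % 2 = 1 := by omega
            have := hlow _ _ (Nat.odd_iff.mpr hodd3) closed2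
            omega
          · have hodd2' := Nat.odd_iff.mp hodd2
            have hodd3 : (jj + 2) % 2 = 1 := by omega
            have := hlow _ _ (Nat.odd_iff.mpr hodd3) closed1
            omega
        have finisher : ∀ c2 : ℕ → V, (∀ t, adj (c2 t) (c2 (t + 1))) →
            (∀ t, c2 (t + p) = c2 t) → c2 0 = f (m - 1) →
            (∀ s, s < p → ∃ d t, t < p ∧ d ≤ 1 ∧ GWalk adj d (cc s) (c2 t)) → False := by
          intro c2 h2adj h2per h2v hclose
          have reach : ∀ w : V, ∃ d t, t < p ∧ d ≤ max (m - 1) 1 ∧ GWalk adj d w (c2 t) := by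
            intro w
            obtain ⟨a, rfl⟩ := hbijg.2 w
            by_cases haa : a.val < m
            · refine ⟨m - 1 - a.val, 0, hpos, by omega, ?_⟩
              rw [gval_lt a haa]
              have := gwalk_fun (adj := adj) f a.val (m - 1 - a.val)
                (fun u hu hu' => hff u (by omega))
              rwa [show a.val + (m - 1 - a.val) = m - 1 by omega, ← h2v] at this
            · obtain ⟨d, t, ht, hd, hw⟩ := hclose (a.val - m) (by have := a.isLt; omega)
              rw [gval_ge a haa]
              exact ⟨d, t, ht, by omega, hw⟩
          have reachx : GWalk adj (m - 1) xb (c2 0) := by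
            have := gwalk_fun (adj := adj) f 0 (m - 1) (fun u hu hu' => hff u (by omega))
            rwa [show (0:ℕ) + (m - 1) = m - 1 by omega, hff0, ← h2v] at this
          obtain ⟨d2, t2, ht2, hd2, w2⟩ := reach yb
          exact hnw (main_walk hp hoddp hsymm h2adj h2per hpos ht2 reachx w2
            (hnbr xb) (by omega))
        rcases hjcase with rfl | hjeq
        · -- jj = 2
          set c2 : ℕ → V := fun t => if t % p = 0 then f (m - 1) else cc (t % p + 1)
            with hc2def
          refine finisher c2 ?_ ?_ ?_ ?_
          · intro t
            have hr : t % p < p := Nat.mod_lt _ hpos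
            have hs1 : (t + 1) % p = (t % p + 1) % p := by rw [Nat.add_mod, hone]
            simp only [hc2def]
            by_cases h0 : t % p = 0
            · have ht1 : (t + 1) % p = 1 := by rw [hs1, h0, Nat.zero_add, hone]
              rw [if_pos h0, if_neg (by omega), ht1]
              exact hvj
            · by_cases hp1 : t % p = p - 1
              · have ht1 : (t + 1) % p = 0 := by
                  rw [hs1, hp1, show p - 1 + 1 = p by omega, Nat.mod_self]
                rw [if_neg h0, if_pos ht1, hp1, show p - 1 + 1 = p by omega, hccp0]
                exact hsymm hvadj0
              · have ht1 : (t + 1) % p = t % p + 1 := by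
                  rw [hs1, Nat.mod_eq_of_lt (by omega)]
                rw [if_neg h0, if_neg (by omega), ht1]
                exact hccadj (t % p + 1)
          · intro t
            simp only [hc2def, Nat.add_mod_right]
          · simp [hc2def]
          · intro s hs
            by_cases hs1' : s = 1
            · refine ⟨1, 1, by omega, le_rfl, ?_⟩
              have hc21 : c2 1 = cc 2 := by
                simp only [hc2def]
                rw [if_neg (by omega), hone]
              rw [hc21, hs1']
              exact gwalk_one (hccadj 1)
            · by_cases hs0 : s = 0
              · refine ⟨0, p - 1, by omega, by omega, ?_⟩
                show cc s = c2 (p - 1)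
                have hmodp : (p - 1) % p = p - 1 := Nat.mod_eq_of_lt (by omega)
                simp only [hc2def]
                rw [if_neg (by omega), hmodp, show p - 1 + 1 = p by omega, hccp0, hs0]
              · refine ⟨0, s - 1, by omega, by omega, ?_⟩
                show cc s = c2 (s - 1)
                have hmods : (s - 1) % p = s - 1 := Nat.mod_eq_of_lt (by omega)
                simp only [hc2def]
                rw [if_neg (by omega), hmods, show s - 1 + 1 = s by omega]
        · -- jj = p - 2
          rw [hjeq] at hvj
          set c2 : ℕ → V := fun t => if t % p = 0 then f (m - 1) else cc (p - 1 - t % p)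
            with hc2def
          refine finisher c2 ?_ ?_ ?_ ?_
          · intro t
            have hr : t % p < p := Nat.mod_lt _ hpos
            have hs1 : (t + 1) % p = (t % p + 1) % p := by rw [Nat.add_mod, hone]
            simp only [hc2def]
            by_cases h0 : t % p = 0
            · have ht1 : (t + 1) % p = 1 := by rw [hs1, h0, Nat.zero_add, hone]
              rw [if_pos h0, if_neg (by omega), ht1, show p - 1 - 1 = p - 2 by omega]
              exact hvj
            · by_cases hp1 : t % p = p - 1
              · have ht1 : (t + 1) % p = 0 := by
                  rw [hs1, hp1, show p - 1 + 1 = p by omega, Nat.mod_self]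
                rw [if_neg h0, if_pos ht1, hp1, show p - 1 - (p - 1) = 0 by omega]
                exact hsymm hvadj0
              · have ht1 : (t + 1) % p = t % p + 1 := by
                  rw [hs1, Nat.mod_eq_of_lt (by omega)]
                rw [if_neg h0, if_neg (by omega), ht1]
                have := hccadj (p - 1 - (t % p + 1))
                rw [show p - 1 - (t % p + 1) + 1 = p - 1 - t % p by omega] at this
                exact hsymm this
          · intro t
            simp only [hc2def, Nat.add_mod_right]
          · simp [hc2def]
          · intro s hs
            by_cases hsp : s = p - 1
            · refine ⟨1, p - 1, by omega, le_rfl, ?_⟩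
              have hc2p : c2 (p - 1) = cc 0 := by
                simp only [hc2def]
                rw [if_neg (by rw [Nat.mod_eq_of_lt (by omega)]; omega),
                  Nat.mod_eq_of_lt (by omega), show p - 1 - (p - 1) = 0 by omega]
              rw [hc2p, hsp]
              have := hccadj (p - 1)
              rw [show p - 1 + 1 = p by omega, hccp0] at this
              exact gwalk_one this
            · refine ⟨0, p - 1 - s, by omega, by omega, ?_⟩
              show cc s = c2 (p - 1 - s)
              have hmods : (p - 1 - s) % p = p - 1 - s := Nat.mod_eq_of_lt (by omega)
              simp only [hc2def]
              rw [if_neg (by omega), hmods, show p - 1 - (p - 1 - s) = s by omega]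
      have keyMixed : ∀ a b : Fin n, a.val < m → ¬ b.val < m → adj (g a) (g b) →
          FAdj n p a b := by
        intro a b h1 h2 hab
        rw [gval_lt a h1, gval_ge b h2] at hab
        have hb := b.isLt
        have ham : a.val = m - 1 := by
          by_contra hne2
          have hccval : cc (b.val - m) = c (((b.val - m) + i₀) % p) :=
            c_mod hpos hcper _
          have wcomb : GWalk adj (a.val + 1) xb (c (((b.val - m) + i₀) % p)) :=
            gwalk_append (walk_to a.val (by omega)) (gwalk_one (hccval ▸ hab))
          have := cycDist_le (Nat.mod_lt _ hpos) wcomb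
          omega
        by_cases hbm : b.val = m
        · exact Or.inl (Or.inl (by omega))
        · rw [ham] at hab
          exact (hard (b.val - m) (by omega) (by omega) hab).elim
      have key : ∀ a b : Fin n, adj (g a) (g b) → FAdj n p a b := by
        intro a b hab
        have ha := a.isLt; have hb := b.isLt
        by_cases h1 : a.val < m <;> by_cases h2 : b.val < m
        · rw [gval_lt a h1, gval_lt b h2] at hab
          have hne2 : a.val ≠ b.val := by
            intro h
            exact hirr _ (by rwa [h] at hab)
          have hno1 : ¬ (a.val + 2 ≤ b.val) := by
            intro h
            have wcomb : GWalk adj (a.val + (1 + (m - b.val))) xb (c i₀) :=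
              gwalk_append (walk_to a.val (by omega))
                (gwalk_append (gwalk_one hab) (walk_from b.val (by omega)))
            have := cycDist_le hi₀ wcomb
            omega
          have hno2 : ¬ (b.val + 2 ≤ a.val) := by
            intro h
            have wcomb : GWalk adj (b.val + (1 + (m - a.val))) xb (c i₀) :=
              gwalk_append (walk_to b.val (by omega))
                (gwalk_append (gwalk_one (hsymm hab)) (walk_from a.val (by omega)))
            have := cycDist_le hi₀ wcomb
            omega
          exact Or.inl (by omega)
        · exact keyMixed a b h1 h2 hab
        · exact fadj_symm (keyMixed b a h2 h1 (hsymm hab))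
        · rw [gval_ge a h1, gval_ge b h2] at hab
          have hcl := cyc_classify hp hoddp hsymm hirr hccadj hccper hlow
            (i := a.val - m) (j := b.val - m) (by omega) (by omega) hab
          unfold FAdj
          rcases hcl with h | h
          · rcases Nat.lt_or_ge (a.val - m + 1) p with h2' | h2'
            · rw [Nat.mod_eq_of_lt h2'] at h
              exact Or.inl (Or.inl (by omega))
            · rw [show a.val - m + 1 = p by omega, Nat.mod_self] at h
              exact Or.inr (Or.inr ⟨by omega, by omega⟩)
          · rcases Nat.lt_or_ge (b.val - m + 1) p with h2' | h2'
            · rw [Nat.mod_eq_of_lt h2'] at h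
              exact Or.inl (Or.inr (by omega))
            · rw [show b.val - m + 1 = p by omega, Nat.mod_self] at h
              exact Or.inr (Or.inl ⟨by omega, by omega⟩)
      have key2 : ∀ a b : Fin n, FAdj n p a b → adj (g a) (g b) := by
        have succ_case : ∀ a b : Fin n, a.val + 1 = b.val → adj (g a) (g b) := by
          intro a b hsucc
          have ha := a.isLt; have hb := b.isLt
          by_cases h2 : b.val < m
          · rw [gval_lt a (by omega), gval_lt b (by omega), ← hsucc]
            exact hff a.val (by omega)
          · by_cases h3 : b.val = m
            · rw [gval_lt a (by omega), gval_ge b (by omega),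
                show a.val = m - 1 by omega, show b.val - m = 0 by omega]
              exact hvadj0
            · rw [gval_ge a (by omega), gval_ge b (by omega),
                show b.val - m = (a.val - m) + 1 by omega]
              exact hccadj _
        intro a b hF
        have ha := a.isLt; have hb := b.isLt
        unfold FAdj at hF
        rcases hF with (h | h) | (⟨hA, hB⟩ | ⟨hA, hB⟩)
        · exact succ_case a b h
        · exact hsymm (succ_case b a h)
        · rw [gval_ge a (by omega), gval_ge b (by omega),
            show a.val - m = 0 by omega, show b.val - m = p - 1 by omega]
          have := hccadj (p - 1)
          rw [show p - 1 + 1 = p by omega, hccp0] at this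
          exact hsymm this
        · rw [gval_ge a (by omega), gval_ge b (by omega),
            show b.val - m = 0 by omega, show a.val - m = p - 1 by omega]
          have := hccadj (p - 1)
          rw [show p - 1 + 1 = p by omega, hccp0] at this
          exact this
      refine ⟨(Equiv.ofBijective g hbijg).symm, ?_⟩
      intro x y
      have hx : g ((Equiv.ofBijective g hbijg).symm x) = x :=
        (Equiv.ofBijective g hbijg).apply_symm_apply x
      have hy : g ((Equiv.ofBijective g hbijg).symm y) = y :=
        (Equiv.ofBijective g hbijg).apply_symm_apply y
      constructor
      · intro hadj
        exact key _ _ (by rwa [hx, hy])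
      · intro hF
        have := key2 _ _ hF
        rwa [hx, hy] at this

  · -- iso → γ = 2n-p-1
    rintro ⟨e, he⟩
    refine le_antisymm hub ?_
    by_contra hcon
    push_neg at hcon
    have hγle : γ ≤ 2 * n - p - 2 := by omega
    have hn0 : 0 < n := by omega
    set x : V := e.symm ⟨0, hn0⟩ with hx
    have wk : GWalk adj (2 * n - p - 2) x x := hγ1 x x _ (by omega)
    have wmap : GWalk (FAdj n p) (2 * n - p - 2) (e x) (e x) :=
      gwalk_map e (fun a b hab => (he a b).mp hab) wk
    have hex : (e x).val = 0 := by rw [hx, Equiv.apply_symm_apply]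
    have := fmain hp hpn hpm2 (by omega) hex hex wmap
    omega
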